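/- arXiv:2601.10842 — 5 statements merged into one kernel-verified Lean document; each statement's English description precedes it below -/
import Mathlib

section
/- Let G be a closed graph on {1,...,n} with no clique of size 4. If {i,j,k} and {i',j',k'} are two triangles of G with i<j<k and i'<j'<k', and (i,j,k) ≠ (i',j',k'), then i ≠ i' and ({j,k} ≠ {j',k'}). -/
/-!
In a closed graph the later neighbours of a vertex are pairwise adjacent, and an edge `{a, d}`
makes every vertex between `a` and `d` a neighbour of `a`. Hence, without a `K₄`, no edge spans
two intermediate vertices. Two distinct triangles sharing their first vertex, or their last two
vertices, would produce such an edge.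
-/

namespace SimpleGraph

variable {α : Type*} [LinearOrder α]

def IsClosedLabeling (G : SimpleGraph α) : Prop :=
  ∀ i j k : α, i < j → j < k → G.Adj i k → G.Adj i j ∧ G.Adj j k

namespace IsClosedLabeling

variable {G : SimpleGraph α} (hG : G.IsClosedLabeling)
include hG

theorem adj_of_lt_of_adj {i j k : α} (hij : i < j) (hjk : j < k) (hik : G.Adj i k) :
    G.Adj i j :=
  (hG i j k hij hjk hik).1

theorem isClique_upper_neighbors {i : α} {s : Set α} (hs : ∀ x ∈ s, i < x ∧ G.Adj i x) :
    G.IsClique s := by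
  intro x hx y hy hxy
  obtain ⟨hix, hAx⟩ := hs x hx
  obtain ⟨hiy, hAy⟩ := hs y hy
  rcases hxy.lt_or_gt with h | h
  · exact (hG i x y hix h hAy).2
  · exact (hG i y x hiy h hAx).2.symm

theorem card_upper_neighbors_lt {m : ℕ} (hm : G.CliqueFree (m + 1)) {i : α} {s : Finset α}
    (hs : ∀ x ∈ s, i < x ∧ G.Adj i x) : s.card < m := by
  by_contra! hms
  obtain ⟨t, hts, rfl⟩ := Finset.exists_subset_card_eq hms
  have ht : ∀ x ∈ t, i < x ∧ G.Adj i x := fun x hx => hs x (hts hx)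
  exact hm _ <| (IsNClique.mk (hG.isClique_upper_neighbors ht) rfl).insert
    fun x hx => (ht x hx).2

theorem not_adj_of_lt_of_lt_of_lt (h4 : G.CliqueFree 4) {a b c d : α}
    (hab : a < b) (hbc : b < c) (hcd : c < d) : ¬ G.Adj a d := by
  intro had
  have hac : G.Adj a c := hG.adj_of_lt_of_adj (hab.trans hbc) hcd had
  have hbcd : ({b, c, d} : Finset α).card = 3 :=
    Finset.card_eq_three.2 ⟨b, c, d, hbc.ne, (hbc.trans hcd).ne, hcd.ne, rfl⟩
  refine (hG.card_upper_neighbors_lt h4 (i := a) ?_).ne hbcd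
  simp only [Finset.mem_insert, Finset.mem_singleton, forall_eq_or_imp, forall_eq]
  exact ⟨⟨hab, hG.adj_of_lt_of_adj hab hbc hac⟩, ⟨hab.trans hbc, hac⟩,
    ⟨hab.trans (hbc.trans hcd), had⟩⟩

end IsClosedLabeling

end SimpleGraph

theorem Finset.pair_eq_pair_of_lt {α : Type*} [LinearOrder α] {a b c d : α}
    (hab : a < b) (hcd : c < d) (h : ({a, b} : Finset α) = {c, d}) : a = c ∧ b = d := by
  have hset := congrArg (fun s : Finset α => (s : Set α)) h
  simp only [Finset.coe_insert, Finset.coe_singleton, Set.pair_eq_pair_iff] at hset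
  rcases hset with hsame | ⟨rfl, rfl⟩
  · exact hsame
  · exact absurd (hab.trans hcd) (lt_irrefl _)

theorem closed_K4free_distinct_triangles_general
    (n : ℕ) (G : SimpleGraph (Fin n))
    (hclosed : ∀ i j k : Fin n, i < j → j < k → G.Adj i k → G.Adj i j ∧ G.Adj j k)
    (hK4free : ∀ s : Finset (Fin n), ¬ G.IsNClique 4 s)
    (i j k i' j' k' : Fin n)
    (hij : i < j) (hjk : j < k) (hij' : i' < j') (hjk' : j' < k')
    (h2 : G.Adj i k)
    (h2' : G.Adj i' k')
    (hne : (i, j, k) ≠ (i', j', k')) :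
    i ≠ i' ∧ ({j, k} : Finset (Fin n)) ≠ ({j', k'} : Finset (Fin n)) := by
  have no_long_edge {a b c d : Fin n} (hab : a < b) (hbc : b < c) (hcd : c < d) :
      ¬ G.Adj a d :=
    SimpleGraph.IsClosedLabeling.not_adj_of_lt_of_lt_of_lt hclosed hK4free hab hbc hcd
  constructor
  · rintro rfl
    rcases lt_trichotomy k k' with hkk | rfl | hkk
    · exact no_long_edge hij hjk hkk h2'
    · have hjj : j ≠ j' := fun h => hne (h ▸ rfl)
      rcases hjj.lt_or_gt with h | h
      · exact no_long_edge hij h hjk' h2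
      · exact no_long_edge hij' h hjk h2'
    · exact no_long_edge hij' hjk' hkk h2
  · intro hpair
    obtain ⟨rfl, rfl⟩ := Finset.pair_eq_pair_of_lt hjk hjk' hpair
    have hii : i ≠ i' := fun h => hne (h ▸ rfl)
    rcases hii.lt_or_gt with h | h
    · exact no_long_edge h hij' hjk h2
    · exact no_long_edge h hij hjk h2'

/-- In a closed graph with no clique of size 4, two distinct triangles
`{i<j<k}`, `{i'<j'<k'}` satisfy `i ≠ i'` and `{j,k} ≠ {j',k'}`. -/
theorem closed_K4free_distinct_triangles
    (n : ℕ) (G : SimpleGraph (Fin n))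
    (hclosed : ∀ i j k : Fin n, i < j → j < k → G.Adj i k → G.Adj i j ∧ G.Adj j k)
    (hK4free : ∀ s : Finset (Fin n), ¬ G.IsNClique 4 s)
    (i j k i' j' k' : Fin n)
    (hij : i < j) (hjk : j < k) (hij' : i' < j') (hjk' : j' < k')
    (h1 : G.Adj i j) (h2 : G.Adj i k) (h3 : G.Adj j k)
    (h1' : G.Adj i' j') (h2' : G.Adj i' k') (h3' : G.Adj j' k')
    (hne : (i, j, k) ≠ (i', j', k')) :
    i ≠ i' ∧ ({j, k} : Finset (Fin n)) ≠ ({j', k'} : Finset (Fin n)) :=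
  closed_K4free_distinct_triangles_general n G hclosed hK4free i j k i' j' k' hij hjk hij' hjk' h2
    h2' hne
end

section
/- Let G be a closed graph on {1,...,n} with no clique of size 4. In the polynomial ring S = K[x_1,...,x_n, y_1,...,y_n, T_e : e ∈ E(G)], the set of monomials L = { x_i·T_{jk}, y_j·T_{ik} : {i,j,k} a triangle of G with i<j<k } consists of pairwise coprime monomials. -/
/-!
In a closed graph the vertices lying between the endpoints of an edge `{a, b}` form a clique,
so without `K₄` every edge has `b ≤ a + 2` and every triangle is `{i, i+1, i+2}`. Hence `L`
consists of the monomials `x_i T_{i+1,i+2}` and `y_{i+1} T_{i,i+2}`, and each single variable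
determines which of them it divides: `x` and `y` carry `i`, and `T_{jk}` carries `j` together
with the kind of monomial through `k - j ∈ {1, 2}`.
-/

open MvPolynomial

/-- Variables of the ring `S = K[x_1,…,x_n, y_1,…,y_n, T_e : e ∈ E(G)]`:
`x i` is `Sum.inl (Sum.inl i)`, `y i` is `Sum.inl (Sum.inr i)` and the `T`
variables are indexed by the (ordered) edges of `G`. -/
abbrev ReesVars (n : ℕ) (G : SimpleGraph (Fin n)) : Type :=
  (Fin n ⊕ Fin n) ⊕ {e : Fin n × Fin n // G.Adj e.1 e.2}

/-- The set `L = { x_i T_{jk}, y_j T_{ik} : {i,j,k} a triangle of G, i<j<k }`. -/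
def ENLeadMonomials {K : Type*} [Field K] (n : ℕ) (G : SimpleGraph (Fin n)) :
    Set (MvPolynomial (ReesVars n G) K) :=
  {p | ∃ (i j k : Fin n) (_ : G.Adj i j) (_ : G.Adj i k) (hjk : G.Adj j k)
        (hik : G.Adj i k), i < j ∧ j < k ∧
      (p = X (Sum.inl (Sum.inl i)) * X (Sum.inr ⟨(j, k), hjk⟩) ∨
       p = X (Sum.inl (Sum.inr j)) * X (Sum.inr ⟨(i, k), hik⟩))}

theorem MvPolynomial.eq_or_eq_of_X_dvd_X_mul_X {σ R : Type*} [CommRing R] [IsCancelMulZero R]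
    [Nontrivial R] {v a b : σ} (h : (X v : MvPolynomial σ R) ∣ X a * X b) : v = a ∨ v = b := by
  simpa only [X_dvd_X] using X_dvd_mul_iff.mp h

namespace SimpleGraph

theorem adj_of_le_of_lt_of_le {α : Type*} [LinearOrder α] {G : SimpleGraph α}
    (hclosed : ∀ i j k : α, i < j → j < k → G.Adj i k → G.Adj i j ∧ G.Adj j k)
    {a b u w : α} (hab : G.Adj a b) (hau : a ≤ u) (huw : u < w) (hwb : w ≤ b) : G.Adj u w := by
  have haw : G.Adj a w := by
    rcases hwb.lt_or_eq with hwb | rfl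
    · exact (hclosed a w b (hau.trans_lt huw) hwb hab).1
    · exact hab
  rcases hau.lt_or_eq with hau | rfl
  · exact (hclosed a u w hau huw haw).2
  · exact haw

theorem val_le_val_add_two_of_adj {n : ℕ} {G : SimpleGraph (Fin n)}
    (hclosed : ∀ i j k : Fin n, i < j → j < k → G.Adj i k → G.Adj i j ∧ G.Adj j k)
    (hK4free : ∀ s : Finset (Fin n), ¬ G.IsNClique 4 s)
    {a b : Fin n} (hab : G.Adj a b) : b.val ≤ a.val + 2 := by
  by_contra! hfar
  let c : Fin n := ⟨a + 1, by omega⟩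
  let d : Fin n := ⟨a + 2, by omega⟩
  have hac : a < c := Fin.mk_lt_mk.mpr (by omega)
  have hcd : c < d := Fin.mk_lt_mk.mpr (by omega)
  have hdb : d < b := Fin.lt_def.mpr (by simp only [d]; omega)
  have adj {u w : Fin n} (hau : a ≤ u) (huw : u < w) (hwb : w ≤ b) : G.Adj u w :=
    adj_of_le_of_lt_of_le hclosed hab hau huw hwb
  refine hK4free {a, c, d, b} (IsNClique.insert (is3Clique_triple_iff.mpr ⟨?_, ?_, ?_⟩) ?_)
  · exact adj hac.le hcd hdb.le
  · exact adj hac.le (hcd.trans hdb) le_rfl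
  · exact adj (hac.trans hcd).le hdb le_rfl
  · simp only [Finset.mem_insert, Finset.mem_singleton, forall_eq_or_imp, forall_eq]
    exact ⟨adj le_rfl hac (hcd.trans hdb).le, adj le_rfl (hac.trans hcd) hdb.le, hab⟩

theorem val_eq_of_triangle {n : ℕ} {G : SimpleGraph (Fin n)}
    (hclosed : ∀ i j k : Fin n, i < j → j < k → G.Adj i k → G.Adj i j ∧ G.Adj j k)
    (hK4free : ∀ s : Finset (Fin n), ¬ G.IsNClique 4 s)
    {i j k : Fin n} (hij : i < j) (hjk : j < k) (hik : G.Adj i k) :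
    j.val = i.val + 1 ∧ k.val = i.val + 2 := by
  have := val_le_val_add_two_of_adj hclosed hK4free hik
  rw [Fin.lt_def] at hij hjk
  omega

end SimpleGraph

open SimpleGraph in
theorem eq_of_X_dvd_of_mem_ENLeadMonomials {K : Type*} [Field K] {n : ℕ} {G : SimpleGraph (Fin n)}
    (hclosed : ∀ i j k : Fin n, i < j → j < k → G.Adj i k → G.Adj i j ∧ G.Adj j k)
    (hK4free : ∀ s : Finset (Fin n), ¬ G.IsNClique 4 s)
    {p q : MvPolynomial (ReesVars n G) K} (hp : p ∈ ENLeadMonomials n G)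
    (hq : q ∈ ENLeadMonomials n G) {v : ReesVars n G} (hvp : X v ∣ p) (hvq : X v ∣ q) :
    p = q := by
  obtain ⟨i, j, k, -, -, ejk, eik, hij, hjk, hp⟩ := hp
  obtain ⟨a, b, c, -, -, ebc, eac, hab, hbc, hq⟩ := hq
  obtain ⟨hj, hk⟩ := val_eq_of_triangle hclosed hK4free hij hjk eik
  obtain ⟨hb, hc⟩ := val_eq_of_triangle hclosed hK4free hab hbc eac
  have same_triangle (h : i.val = a.val) : i = a ∧ j = b ∧ k = c := by
    simp only [Fin.ext_iff]
    omega
  -- In each of the sixteen cases the shared variable either is impossible (different kinds of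
  -- variables, or `T_{j,j+1} = T_{a,a+2}`) or pins down the smallest vertex of the triangle.
  rcases hp with rfl | rfl <;> rcases hq with rfl | rfl <;>
    rcases MvPolynomial.eq_or_eq_of_X_dvd_X_mul_X hvp with rfl | rfl <;>
    rcases MvPolynomial.eq_or_eq_of_X_dvd_X_mul_X hvq with h | h <;>
    simp only [Sum.inl.injEq, Sum.inr.injEq, Subtype.mk.injEq, Prod.mk.injEq, reduceCtorEq,
      Fin.ext_iff] at h <;>
    first
      | omega
      | obtain ⟨rfl, rfl, rfl⟩ := same_triangle (by omega); rfl

/-- For a closed graph with no clique of size 4, the monomials in `L`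
are pairwise coprime: no variable divides two distinct members of `L`. -/
theorem EN_lead_monomials_pairwise_coprime {K : Type*} [Field K]
    (n : ℕ) (G : SimpleGraph (Fin n))
    (hclosed : ∀ i j k : Fin n, i < j → j < k → G.Adj i k → G.Adj i j ∧ G.Adj j k)
    (hK4free : ∀ s : Finset (Fin n), ¬ G.IsNClique 4 s) :
    ∀ p ∈ ENLeadMonomials (K := K) n G, ∀ q ∈ ENLeadMonomials (K := K) n G,
      p ≠ q → ∀ v : ReesVars n G, ¬ (X v ∣ p ∧ X v ∣ q) := by
  intro p hp q hq hpq v ⟨hvp, hvq⟩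
  exact hpq (eq_of_X_dvd_of_mem_ENLeadMonomials hclosed hK4free hp hq hvp hvq)
end

section
/- Let R be a graded K-algebra with R_0 = K and I a homogeneous ideal minimally generated by f_1,...,f_s, all of degree d. Let L be the kernel of the map R[T_1,...,T_s] → R[T] sending T_i ↦ f_i·T (the relations of the Rees algebra), bigraded with deg T_i = (1,d). Then for every m ≥ 1, the first syzygy module Ω_1(I^m) of I^m is isomorphic as a graded R-module to L_{(m,−)}/L_{(m, ≥ md)}, where L_{(m,−)} denotes the elements of L of T-degree m and L_{(m,≥md)} those of T-degree m whose R-degree components are all ≥ md. -/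
/-!
The monomials `f^e = ∏ fᵢ^{eᵢ}` with `|e| = m` generate `Iᵐ`, and a relation of the Rees algebra of
`T`-degree `m` is exactly a syzygy of these monomials (its coefficients are those of the syzygy);
the relations of bidegree `(m, md)` are the syzygies with coefficients in `K`.

Since `R₀ = K` and all the `f^e` and `hⱼ` lie in `R_{md}`, taking degree-`md` parts shows that they
span the same `K`-vector space, in which the minimal generators `hⱼ` are a basis. Write
`f^e = ∑ⱼ C_{e,j} hⱼ` with `C_{e,j} ∈ K`. The matrix `C` maps syzygies of the monomials onto
syzygies of `h`, since it has a right inverse `σ` obtained by writing the `hⱼ` in terms of the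
`f^e`. Its kernel is generated by syzygies with coefficients in `K`, because the projection
`x ↦ x - σ (C x)` onto it has a `K`-rational matrix.
-/

open MvPolynomial

/-- The Rees map `φ : R[T_1,…,T_s] → R[T]`, `T_i ↦ f_i T`. -/
noncomputable def reesMap {R : Type*} [CommRing R] {s : ℕ} (f : Fin s → R) :
    MvPolynomial (Fin s) R →ₐ[R] Polynomial R :=
  MvPolynomial.aeval fun i => Polynomial.C (f i) * Polynomial.X

/-- `L_{(m,−)}`: the `R`-submodule of relations of the Rees algebra that are
`T`-homogeneous of `T`-degree `m`. -/
noncomputable def relationsTDegree {R : Type*} [CommRing R] {s : ℕ} (f : Fin s → R)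
    (m : ℕ) : Submodule R (MvPolynomial (Fin s) R) :=
  (Submodule.restrictScalars R (RingHom.ker (reesMap f).toRingHom)) ⊓
    MvPolynomial.homogeneousSubmodule (Fin s) R m

/-- The `R`-submodule of `L_{(m,−)}` spanned by the relations of minimal bidegree
`(m, md)`, i.e. the `T`-homogeneous relations of `T`-degree `m` all of whose
coefficients lie in `𝒜 0`. -/
noncomputable def relationsMinRDegree {K R : Type*} [Field K] [CommRing R] [Algebra K R]
    (𝒜 : ℕ → Submodule K R) {s : ℕ} (f : Fin s → R) (m : ℕ) :
    Submodule R ↥(relationsTDegree f m) :=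
  Submodule.comap (relationsTDegree f m).subtype
    (Submodule.span R {F | F ∈ RingHom.ker (reesMap f).toRingHom ∧
      F.IsHomogeneous m ∧ ∀ α, MvPolynomial.coeff α F ∈ 𝒜 0})

open Submodule LinearMap

theorem LinearMap.ker_eq_span_range_sub_of_comp_eq_id {R P ι : Type*} [Ring R]
    [AddCommGroup P] [Module R P] (c : (ι →₀ R) →ₗ[R] P) (σ : P →ₗ[R] (ι →₀ R))
    (hcσ : c ∘ₗ σ = id) :
    ker c = span R (Set.range fun α => Finsupp.single α 1 - σ (c (Finsupp.single α 1))) := by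
  have hcσ' (z : P) : c (σ z) = z := congr($hcσ z)
  apply le_antisymm
  · intro x hx
    have hproj (y : ι →₀ R) : y - σ (c y) ∈
        span R (Set.range fun α => Finsupp.single α 1 - σ (c (Finsupp.single α 1))) := by
      induction y using Finsupp.induction_linear with
      | zero => simp
      | add y z hy hz => simpa [add_sub_add_comm] using add_mem hy hz
      | single α r =>
        rw [← Finsupp.smul_single_one, map_smul, map_smul, ← smul_sub]
        exact smul_mem _ r (subset_span ⟨α, rfl⟩)
    simpa [mem_ker.mp hx] using hproj x
  · rw [span_le]
    rintro _ ⟨α, rfl⟩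
    simp [hcσ']

def rationalSyzygies (K : Type*) {R ι : Type*} [CommRing K] [CommRing R] [Algebra K R]
    (v : ι → R) : Set (ι →₀ R) :=
  {x | Finsupp.linearCombination R v x = 0 ∧ ∀ α, x α ∈ (algebraMap K R).range}

section Coordinates

variable {K R ι κ : Type*} [Field K] [CommRing R] [Algebra K R]

/- When `v α = ∑ⱼ C α j • w j` and `w j = ∑ α, U j α • v α` with coefficients in `K`,
`coordMap R C` maps syzygies of `v` onto syzygies of `w` and `coordSection R U` is a right
inverse of it. -/
variable (R) in
noncomputable def coordMap (C : ι → κ → K) : (ι →₀ R) →ₗ[R] (κ → R) :=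
  Finsupp.linearCombination R fun α => algebraMap K R ∘ C α

variable (R) in
noncomputable def coordSection [Fintype κ] (U : κ → ι →₀ K) : (κ → R) →ₗ[R] (ι →₀ R) :=
  Fintype.linearCombination R fun j => (U j).mapRange (algebraMap K R) (map_zero _)

variable {v : ι → R} {w : κ → R} {C : ι → κ → K} {U : κ → ι →₀ K}

theorem coordMap_apply (x : ι →₀ R) (j : κ) :
    coordMap R C x j = x.sum fun α r => r * algebraMap K R (C α j) := by
  simp [coordMap, Finsupp.linearCombination_apply, Finsupp.sum_apply']

theorem coordMap_mapRange (x : ι →₀ K) :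
    coordMap R C (x.mapRange (algebraMap K R) (map_zero _)) =
      algebraMap K R ∘ Finsupp.linearCombination K C x := by
  ext j
  simp [coordMap_apply, Finsupp.sum_mapRange_index, Finsupp.linearCombination_apply,
    Finsupp.sum_apply', map_finsuppSum]

variable [Fintype κ]

theorem coordSection_apply (z : κ → R) (α : ι) :
    coordSection R U z α = ∑ j, z j * algebraMap K R (U j α) := by
  simp [coordSection, Fintype.linearCombination_apply]

theorem fintypeLinearCombination_comp_coordMap (hC : ∀ α, ∑ j, C α j • w j = v α) :
    Fintype.linearCombination R w ∘ₗ coordMap R C = Finsupp.linearCombination R v := by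
  refine Finsupp.lhom_ext fun α r => ?_
  simp [coordMap, Fintype.linearCombination_apply, ← hC α, Algebra.smul_def, Finset.mul_sum,
    mul_assoc]

theorem rationalSyzygies_subset_ker_coordMap (hw : LinearIndependent K w)
    (hC : ∀ α, ∑ j, C α j • w j = v α) : rationalSyzygies K v ⊆ ker (coordMap R C) := by
  rintro y ⟨hy, hyK⟩
  have hzK (j : κ) : coordMap R C y j ∈ (algebraMap K R).range := by
    rw [coordMap_apply]
    exact sum_mem fun α _ => mul_mem (hyK α) ⟨C α j, rfl⟩
  choose k hk using hzK
  have hk0 : ∑ j, k j • w j = 0 := by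
    rw [← hy, ← fintypeLinearCombination_comp_coordMap hC]
    simp [Fintype.linearCombination_apply, Algebra.smul_def, hk]
  ext j
  rw [← hk j, Fintype.linearIndependent_iff.mp hw k hk0 j, map_zero, Pi.zero_apply]

theorem linearCombination_coords_eq_single (hw : LinearIndependent K w)
    (hC : ∀ α, ∑ j, C α j • w j = v α)
    (hU : ∀ j, Finsupp.linearCombination K v (U j) = w j) [DecidableEq κ] (j : κ) :
    Finsupp.linearCombination K C (U j) = Pi.single j 1 := by
  apply hw.fintypeLinearCombination_injective
  rw [Fintype.linearCombination_apply_single, one_smul, ← hU j, Finsupp.apply_linearCombination]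
  congr 1
  ext α
  simp [Fintype.linearCombination_apply, hC]

theorem coordMap_comp_coordSection (hw : LinearIndependent K w)
    (hC : ∀ α, ∑ j, C α j • w j = v α) (hU : ∀ j, Finsupp.linearCombination K v (U j) = w j) :
    coordMap R C ∘ₗ coordSection R U = LinearMap.id := by
  classical
  refine LinearMap.pi_ext fun j r => ?_
  ext i
  simp [coordSection, coordMap_mapRange, linearCombination_coords_eq_single hw hC hU,
    Pi.single_apply, apply_ite (algebraMap K R)]

theorem single_sub_coordSection_mem_rationalSyzygies (hw : LinearIndependent K w)
    (hC : ∀ α, ∑ j, C α j • w j = v α) (hU : ∀ j, Finsupp.linearCombination K v (U j) = w j)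
    (α : ι) :
    Finsupp.single α 1 - coordSection R U (coordMap R C (Finsupp.single α 1)) ∈
      rationalSyzygies K v := by
  classical
  have hcσ := coordMap_comp_coordSection (R := R) hw hC hU
  constructor
  · rw [← fintypeLinearCombination_comp_coordMap hC, LinearMap.comp_apply, map_sub,
      ← LinearMap.comp_apply (coordMap R C), hcσ, LinearMap.id_apply, sub_self, map_zero]
  · intro β
    refine sub_mem ?_ ?_
    · rw [Finsupp.single_apply]
      split_ifs
      exacts [one_mem _, zero_mem _]
    · rw [coordSection_apply]
      refine sum_mem fun j _ => mul_mem ?_ ⟨U j β, rfl⟩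
      rw [coordMap_apply, Finsupp.sum_single_index (zero_mul _), one_mul]
      exact ⟨C α j, rfl⟩

theorem ker_coordMap_eq_span_rationalSyzygies (hw : LinearIndependent K w)
    (hC : ∀ α, ∑ j, C α j • w j = v α) (hU : ∀ j, Finsupp.linearCombination K v (U j) = w j) :
    ker (coordMap R C) = span R (rationalSyzygies K v) := by
  refine le_antisymm ?_ (span_le.mpr (rationalSyzygies_subset_ker_coordMap hw hC))
  rw [ker_eq_span_range_sub_of_comp_eq_id _ _ (coordMap_comp_coordSection hw hC hU)]
  exact span_mono (Set.range_subset_iff.mpr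
    (single_sub_coordSection_mem_rationalSyzygies hw hC hU))

end Coordinates

theorem exists_surjective_ker_linearCombination_of_span_eq {K R ι κ : Type*} [Field K]
    [CommRing R] [Algebra K R] [Fintype κ] {v : ι → R} {w : κ → R} (hw : LinearIndependent K w)
    (hvw : span K (Set.range v) = span K (Set.range w)) :
    ∃ Φ : ker (Finsupp.linearCombination R v) →ₗ[R] ker (Fintype.linearCombination R w),
      Function.Surjective Φ ∧
        ker Φ = (span R (rationalSyzygies K v)).comap
          (ker (Finsupp.linearCombination R v)).subtype := by
  have hvK (α : ι) : v α ∈ span K (Set.range w) := hvw ▸ subset_span ⟨α, rfl⟩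
  have hwK (j : κ) : w j ∈ LinearMap.range (Finsupp.linearCombination K v) := by
    rw [Finsupp.range_linearCombination, hvw]
    exact subset_span ⟨j, rfl⟩
  choose C hC using fun α => (mem_span_range_iff_exists_fun K).mp (hvK α)
  choose U hU using hwK
  have hcσ (z : κ → R) : coordMap R C (coordSection R U z) = z :=
    congr($(coordMap_comp_coordSection hw hC hU) z)
  have hfactor := fintypeLinearCombination_comp_coordMap (R := R) hC
  have hmaps (x) (hx : x ∈ ker (Finsupp.linearCombination R v)) :
      coordMap R C x ∈ ker (Fintype.linearCombination R w) := by
    rwa [mem_ker, ← comp_apply, hfactor]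
  refine ⟨(coordMap R C).restrict hmaps, fun z => ?_, ?_⟩
  · refine ⟨⟨coordSection R U z, ?_⟩, Subtype.ext (hcσ z)⟩
    rw [mem_ker, ← hfactor, comp_apply, hcσ]
    exact z.2
  · rw [ker_restrict, ker_coordMap_eq_span_rationalSyzygies hw hC hU]

section GradedSpans

variable {K R ι α β : Type*} [CommSemiring K] [CommRing R] [Algebra K R]
  [DecidableEq ι] [AddRightCancelMonoid ι] (𝒜 : ι → Submodule K R) [GradedAlgebra 𝒜]

theorem mem_span_range_of_mem_graded (h𝒜0 : ∀ r ∈ 𝒜 0, ∃ c : K, r = algebraMap K R c)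
    {n : ι} {v : α → R} (hv : ∀ a, v a ∈ 𝒜 n) {x : R} (hx : x ∈ 𝒜 n)
    (hxv : x ∈ span R (Set.range v)) : x ∈ span K (Set.range v) := by
  obtain ⟨c, rfl⟩ := Finsupp.mem_span_range_iff_exists_finsupp.mp hxv
  rw [← DirectSum.decompose_of_mem_same 𝒜 hx, ← GradedRing.proj_apply, map_finsuppSum]
  refine Submodule.finsuppSum_mem K _ c _ fun a _ => ?_
  have hdeg := DirectSum.coe_decompose_mul_add_of_right_mem 𝒜 (i := 0) (a := c a) (hv a)
  rw [zero_add] at hdeg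
  obtain ⟨k, hk⟩ := h𝒜0 _ (SetLike.coe_mem (DirectSum.decompose 𝒜 (c a) 0))
  rw [GradedRing.proj_apply, smul_eq_mul, hdeg, hk, ← Algebra.smul_def]
  exact smul_mem _ k (subset_span ⟨a, rfl⟩)

theorem span_range_eq_of_mem_graded (h𝒜0 : ∀ r ∈ 𝒜 0, ∃ c : K, r = algebraMap K R c)
    {n : ι} {v : α → R} {w : β → R} (hv : ∀ a, v a ∈ 𝒜 n) (hw : ∀ b, w b ∈ 𝒜 n)
    (hvw : span R (Set.range v) = span R (Set.range w)) :
    span K (Set.range v) = span K (Set.range w) := by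
  refine le_antisymm (span_le.mpr ?_) (span_le.mpr ?_) <;> rintro _ ⟨a, rfl⟩
  · exact mem_span_range_of_mem_graded 𝒜 h𝒜0 hw (hv a) (hvw ▸ subset_span ⟨a, rfl⟩)
  · exact mem_span_range_of_mem_graded 𝒜 h𝒜0 hv (hw a) (hvw ▸ subset_span ⟨a, rfl⟩)

end GradedSpans

theorem linearIndependent_of_forall_span_image_ne {K R κ : Type*} [Field K] [CommRing R]
    [Algebra K R] {h : κ → R}
    (hmin : ∀ a, Ideal.span (h '' {b | b ≠ a}) ≠ Ideal.span (Set.range h)) :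
    LinearIndependent K h := by
  rw [linearIndependent_iff_notMem_span]
  intro a ha
  refine hmin a (le_antisymm (Ideal.span_mono (Set.image_subset_range _ _)) (Ideal.span_le.mpr ?_))
  rintro _ ⟨b, rfl⟩
  rcases eq_or_ne b a with rfl | hb
  · have hset : Set.univ \ {b} = {c | c ≠ b} := by ext; simp
    exact span_le_restrictScalars K R _ (hset ▸ ha)
  · exact Ideal.subset_span ⟨b, hb, rfl⟩

def monomialProducts {R σ : Type*} [CommMonoid R] (f : σ → R) (m : ℕ) :
    {e : σ →₀ ℕ // e.degree = m} → R :=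
  fun e => e.1.prod fun i k => f i ^ k

theorem monomialProducts_mem_graded {ι R S σ : Type*} [CommMonoid R] [SetLike S R]
    [AddCommMonoid ι] (𝒜 : ι → S) [SetLike.GradedMonoid 𝒜] {f : σ → R} {d : ι}
    (hf : ∀ i, f i ∈ 𝒜 d) (m : ℕ) (e : {e : σ →₀ ℕ // e.degree = m}) :
    monomialProducts f m e ∈ 𝒜 (m • d) := by
  have := SetLike.prod_pow_mem_graded 𝒜 (fun _ => d) f (F := e.1.support) e.1 fun i _ => hf i
  rwa [← Finset.sum_smul, ← Finsupp.degree_apply, e.2] at this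

theorem span_range_monomialProducts {R σ : Type*} [CommSemiring R] (f : σ → R) (m : ℕ) :
    Ideal.span (Set.range (monomialProducts f m)) = Ideal.span (Set.range f) ^ m := by
  rw [Ideal.span, Ideal.span, span_pow, ← Set.image_univ (f := f),
    Finsupp.image_pow_eq_finsuppProd_image]
  congr 1
  ext x
  simp [monomialProducts]

section MonomialEmbedding

variable (σ R : Type*) [CommRing R] (m : ℕ)

noncomputable def homogeneousMonomials :
    ({e : σ →₀ ℕ // e.degree = m} →₀ R) →ₗ[R] MvPolynomial σ R :=
  Finsupp.linearCombination R fun e => monomial e.1 1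

variable {σ R m}

theorem homogeneousMonomials_apply (x : {e : σ →₀ ℕ // e.degree = m} →₀ R) :
    homogeneousMonomials σ R m x =
      Finsupp.linearCombination R (basisMonomials σ R) (x.mapDomain Subtype.val) := by
  rw [Finsupp.linearCombination_mapDomain]
  rfl

theorem coeff_homogeneousMonomials (x : {e : σ →₀ ℕ // e.degree = m} →₀ R) (β : σ →₀ ℕ) :
    coeff β (homogeneousMonomials σ R m x) = x.mapDomain Subtype.val β := by
  rw [homogeneousMonomials_apply]
  exact congr($((basisMonomials σ R).repr_linearCombination _) β)

theorem homogeneousMonomials_injective : Function.Injective (homogeneousMonomials σ R m) :=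
  (basisMonomials σ R).linearIndependent.comp Subtype.val Subtype.val_injective

theorem range_homogeneousMonomials :
    LinearMap.range (homogeneousMonomials σ R m) = homogeneousSubmodule σ R m := by
  rw [homogeneousMonomials, Finsupp.range_linearCombination]
  refine le_antisymm (span_le.mpr ?_) fun F hF => ?_
  · rintro _ ⟨e, rfl⟩
    exact isHomogeneous_monomial 1 e.2
  · rw [as_sum F]
    refine sum_mem fun e he => ?_
    have hdeg : e.degree = m := by
      rw [Finsupp.degree_eq_weight_one]; exact hF (mem_support_iff.mp he)
    rw [← mul_one (coeff e F), ← smul_eq_mul, ← smul_monomial]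
    exact smul_mem _ _ (subset_span ⟨⟨e, hdeg⟩, rfl⟩)

end MonomialEmbedding

section ReesRelations

variable {R : Type*} [CommRing R] {s : ℕ} (f : Fin s → R) (m : ℕ)

theorem reesMap_monomial (e : Fin s →₀ ℕ) (r : R) :
    reesMap f (monomial e r) = Polynomial.monomial e.degree (r * e.prod fun i k => f i ^ k) := by
  simp [reesMap, aeval_monomial, mul_pow, Finsupp.prod_mul, ← Polynomial.C_mul_X_pow_eq_monomial,
    Finset.prod_pow_eq_pow_sum, Finsupp.degree_eq_sum, mul_assoc]

theorem reesMap_comp_homogeneousMonomials :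
    (reesMap f).toLinearMap ∘ₗ homogeneousMonomials (Fin s) R m =
      Polynomial.monomial m ∘ₗ Finsupp.linearCombination R (monomialProducts f m) := by
  refine Finsupp.lhom_ext fun e r => ?_
  simp [homogeneousMonomials, smul_monomial, reesMap_monomial, e.2, monomialProducts]

theorem relationsTDegree_eq_map :
    relationsTDegree f m =
      (ker (Finsupp.linearCombination R (monomialProducts f m))).map
        (homogeneousMonomials (Fin s) R m) := by
  have hker :
      ker (reesMap f).toLinearMap = (RingHom.ker (reesMap f).toRingHom).restrictScalars R := by
    ext; simp
  rw [relationsTDegree, ← hker, ← range_homogeneousMonomials, inf_comm, ← map_comap_eq,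
    ← ker_comp, reesMap_comp_homogeneousMonomials,
    ker_comp_of_ker_eq_bot _ (ker_eq_bot.mpr (Polynomial.monomial_injective m))]

theorem homogeneousMonomials_mem_relationsTDegree_iff
    (x : {e : Fin s →₀ ℕ // e.degree = m} →₀ R) :
    homogeneousMonomials (Fin s) R m x ∈ relationsTDegree f m ↔
      Finsupp.linearCombination R (monomialProducts f m) x = 0 := by
  rw [relationsTDegree_eq_map, ← SetLike.mem_coe, map_coe,
    homogeneousMonomials_injective.mem_set_image, SetLike.mem_coe, mem_ker]

theorem setOf_relations_coeff_mem_zero_eq_image {K : Type*} [Field K] [Algebra K R]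
    (𝒜 : ℕ → Submodule K R) [GradedAlgebra 𝒜]
    (h𝒜0 : ∀ r ∈ 𝒜 0, ∃ c : K, r = algebraMap K R c) :
    {F | F ∈ RingHom.ker (reesMap f).toRingHom ∧ F.IsHomogeneous m ∧ ∀ α, coeff α F ∈ 𝒜 0} =
      homogeneousMonomials (Fin s) R m '' rationalSyzygies K (monomialProducts f m) := by
  ext F
  constructor
  · rintro ⟨hker, hhom, hcoeff⟩
    obtain ⟨x, rfl⟩ : F ∈ LinearMap.range (homogeneousMonomials (Fin s) R m) := by
      rwa [range_homogeneousMonomials]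
    refine ⟨x, ⟨?_, fun e => ?_⟩, rfl⟩
    · exact (homogeneousMonomials_mem_relationsTDegree_iff f m x).mp
        (mem_inf.mpr ⟨hker, hhom⟩)
    · obtain ⟨c, hc⟩ := h𝒜0 _ (hcoeff e.1)
      refine ⟨c, ?_⟩
      rw [← hc, coeff_homogeneousMonomials, Finsupp.mapDomain_apply Subtype.val_injective]
  · rintro ⟨x, ⟨hx, hxK⟩, rfl⟩
    obtain ⟨hker, hhom⟩ :=
      mem_inf.mp ((homogeneousMonomials_mem_relationsTDegree_iff f m x).mpr hx)
    refine ⟨hker, hhom, fun β => ?_⟩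
    rw [coeff_homogeneousMonomials]
    by_cases hβ : β ∈ Set.range (Subtype.val : {e : Fin s →₀ ℕ // e.degree = m} → _)
    · obtain ⟨e, rfl⟩ := hβ
      obtain ⟨c, hc⟩ := hxK e
      rw [Finsupp.mapDomain_apply Subtype.val_injective, ← hc]
      exact SetLike.algebraMap_mem_graded 𝒜 c
    · rw [Finsupp.mapDomain_of_notMem_range _ _ hβ]
      exact zero_mem _

noncomputable def relationsTDegreeEquiv :
    relationsTDegree f m ≃ₗ[R] ker (Finsupp.linearCombination R (monomialProducts f m)) :=
  (LinearEquiv.ofEq _ _ (relationsTDegree_eq_map f m)).trans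
    ((ker _).equivMapOfInjective _ homogeneousMonomials_injective).symm

theorem homogeneousMonomials_relationsTDegreeEquiv (F : relationsTDegree f m) :
    homogeneousMonomials (Fin s) R m (relationsTDegreeEquiv f m F) = F := by
  simp [relationsTDegreeEquiv]

theorem relationsMinRDegree_eq_comap {K : Type*} [Field K] [Algebra K R]
    (𝒜 : ℕ → Submodule K R) [GradedAlgebra 𝒜]
    (h𝒜0 : ∀ r ∈ 𝒜 0, ∃ c : K, r = algebraMap K R c) :
    relationsMinRDegree 𝒜 f m =
      ((span R (rationalSyzygies K (monomialProducts f m))).comap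
        (ker (Finsupp.linearCombination R (monomialProducts f m))).subtype).comap
        (relationsTDegreeEquiv f m).toLinearMap := by
  ext F
  rw [relationsMinRDegree, mem_comap, mem_comap, mem_comap, subtype_apply, subtype_apply,
    setOf_relations_coeff_mem_zero_eq_image f m 𝒜 h𝒜0, span_image,
    ← homogeneousMonomials_relationsTDegreeEquiv f m F, ← SetLike.mem_coe, map_coe,
    homogeneousMonomials_injective.mem_set_image, SetLike.mem_coe, LinearEquiv.coe_coe]

end ReesRelations

theorem first_syzygy_iso_rees_relations_general
    {K R : Type*} [Field K] [CommRing R] [Algebra K R]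
    (𝒜 : ℕ → Submodule K R) [GradedAlgebra 𝒜]
    (h𝒜0 : ∀ r ∈ 𝒜 0, ∃ c : K, r = algebraMap K R c)
    (I : Ideal R) (d s m : ℕ) (f : Fin s → R)
    (hfhom : ∀ a, f a ∈ 𝒜 d)
    (hfspan : Ideal.span (Set.range f) = I) :
    ∀ (t : ℕ) (h : Fin t → R), (∀ a, h a ∈ 𝒜 (m * d)) →
      Ideal.span (Set.range h) = I ^ m →
      (∀ a : Fin t, Ideal.span (h '' {b | b ≠ a}) ≠ I ^ m) →
      Nonempty
        ((LinearMap.ker (∑ a : Fin t, (LinearMap.proj a : (Fin t → R) →ₗ[R] R).smulRight (h a)))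
          ≃ₗ[R]
        (↥(relationsTDegree f m) ⧸ relationsMinRDegree 𝒜 f m)) := by
  intro t h hh hhspan hhmin
  have hspanR : span R (Set.range (monomialProducts f m)) = span R (Set.range h) :=
    (span_range_monomialProducts f m).trans (hfspan ▸ hhspan.symm)
  have hspanK := span_range_eq_of_mem_graded 𝒜 h𝒜0
    (monomialProducts_mem_graded 𝒜 hfhom m) hh hspanR
  obtain ⟨Φ, hΦ, hkerΦ⟩ := exists_surjective_ker_linearCombination_of_span_eq
    (linearIndependent_of_forall_span_image_ne (hhspan ▸ hhmin)) hspanK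
  let E := relationsTDegreeEquiv f m
  have hker : ker (Φ ∘ₗ E.toLinearMap) = relationsMinRDegree 𝒜 f m := by
    rw [ker_comp, hkerΦ, relationsMinRDegree_eq_comap f m 𝒜 h𝒜0]
  have hsyz : ∑ a, (LinearMap.proj a).smulRight (h a) = Fintype.linearCombination R h := by
    ext z
    simp [Fintype.linearCombination_apply]
  rw [hsyz]
  exact ⟨((Φ ∘ₗ E.toLinearMap).quotKerEquivOfSurjective (hΦ.comp E.surjective)).symm.trans
    (quotEquivOfEq _ _ hker)⟩

/-- Let `R` be a graded `K`-algebra with `R₀ = K` and `I` a homogeneous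
ideal minimally generated by `f_1,…,f_s`, all of degree `d`.  Let `L` be the kernel of
`R[T_1,…,T_s] → R[T]`, `T_i ↦ f_i T`.  Then for every `m ≥ 1`, the first syzygy module
`Ω₁(Iᵐ)` — the kernel of the map `Rᵗ → R` determined by any minimal homogeneous
generating set `h_1,…,h_t` of `Iᵐ` — is isomorphic as an `R`-module to the quotient of
`L_{(m,−)}` by (the span of) the relations of bidegree `(m, md)`. -/
theorem first_syzygy_iso_rees_relations
    {K R : Type*} [Field K] [CommRing R] [Algebra K R]
    (𝒜 : ℕ → Submodule K R) [GradedAlgebra 𝒜]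
    (h𝒜0 : ∀ r ∈ 𝒜 0, ∃ c : K, r = algebraMap K R c)
    (I : Ideal R) (d s m : ℕ) (hm : 1 ≤ m) (f : Fin s → R)
    (hfhom : ∀ a, f a ∈ 𝒜 d)
    (hfspan : Ideal.span (Set.range f) = I)
    (hfmin : ∀ a : Fin s, Ideal.span (f '' {b | b ≠ a}) ≠ I) :
    ∀ (t : ℕ) (h : Fin t → R), (∀ a, h a ∈ 𝒜 (m * d)) →
      Ideal.span (Set.range h) = I ^ m →
      (∀ a : Fin t, Ideal.span (h '' {b | b ≠ a}) ≠ I ^ m) →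
      Nonempty
        ((LinearMap.ker (∑ a : Fin t, (LinearMap.proj a : (Fin t → R) →ₗ[R] R).smulRight (h a)))
          ≃ₗ[R]
        (↥(relationsTDegree f m) ⧸ relationsMinRDegree 𝒜 f m)) :=
  first_syzygy_iso_rees_relations_general 𝒜 h𝒜0 I d s m f hfhom hfspan
end

section
/- Let R be a graded K-algebra with R_0 = K, I a homogeneous ideal minimally generated by f_1,...,f_s of degree d, and L ⊂ S = R[T_1,...,T_s] the ideal of relations of the Rees algebra of I. If L_{(m,2m)} = 0 (no relations of bidegree (m, md)), then the first syzygy module Ω_1(I^m) is isomorphic as a graded R-module to L_{(m,−)}, the degree-m graded piece of L in the T-grading. -/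
/-!
Write `g_β = f^β` for the exponents `β` of total degree `m`. Both `(h_a)` and `(g_β)` are `K`-bases
of the same subspace of `R`: each spans `(I^m)_{md}` over `K` because `R_0 = K`; the `h_a` are
independent because a `K`-linear relation would make one of them redundant, and the `g_β` because
a `K`-linear relation among them is a form of bidegree `(m, md)` in `L`. The transition matrix
between the two bases is invertible over `K`, hence over `R`, so the syzygy modules of `h` and of
`g` are isomorphic. On forms of `T`-degree `m` the Rees map is `F ↦ F(f) T^m`, so the syzygies
of `g` are exactly the coefficient vectors of the elements of `L_{(m,−)}`.
-/

open MvPolynomial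

open Function Set Module Matrix

section LinearAlgebra

noncomputable def Submodule.comapEquivInfRange {R M N : Type*} [Semiring R] [AddCommMonoid M]
    [Module R M] [AddCommMonoid N] [Module R N] {Φ : M →ₗ[R] N} (hΦ : Injective Φ)
    (q : Submodule R N) : q.comap Φ ≃ₗ[R] ↥(q ⊓ LinearMap.range Φ) :=
  ((q.comap Φ).equivMapOfInjective Φ hΦ).trans
    (LinearEquiv.ofEq _ _ (by rw [Submodule.map_comap_eq, inf_comm]))

theorem sum_proj_smulRight_eq_linearCombination {R M ι : Type*} [CommSemiring R]
    [AddCommMonoid M] [Module R M] [Fintype ι] (h : ι → M) :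
    ∑ a, (LinearMap.proj a : (ι → R) →ₗ[R] R).smulRight (h a) =
      Fintype.linearCombination R h := by
  ext
  simp [Fintype.linearCombination_apply]

theorem exists_transitionMatrices_of_span_eq {K M ι κ : Type*} [CommRing K] [AddCommGroup M]
    [Module K M] [Fintype ι] [Fintype κ] [DecidableEq ι] [DecidableEq κ] {h : ι → M} {g : κ → M}
    (hh : LinearIndependent K h) (hg : LinearIndependent K g)
    (hspan : Submodule.span K (range h) = Submodule.span K (range g)) :
    ∃ (Q : Matrix κ ι K) (P : Matrix ι κ K), Q * P = 1 ∧ P * Q = 1 ∧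
      ∀ a, ∑ β, Q β a • g β = h a := by
  let bg := Basis.span hg
  let bh := (Basis.span hh).map (LinearEquiv.ofEq _ _ hspan)
  refine ⟨bg.toMatrix bh, bh.toMatrix bg, bg.toMatrix_mul_toMatrix_flip bh,
    bh.toMatrix_mul_toMatrix_flip bg, fun a => ?_⟩
  simpa [bg, bh, Basis.span_apply] using congrArg Subtype.val (bg.sum_toMatrix_smul_self bh a)

theorem nonempty_ker_linearCombination_equiv_of_span_eq {K R ι κ : Type*} [CommRing K]
    [CommRing R] [Algebra K R] [Fintype ι] [Fintype κ] {h : ι → R} {g : κ → R}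
    (hh : LinearIndependent K h) (hg : LinearIndependent K g)
    (hspan : Submodule.span K (range h) = Submodule.span K (range g)) :
    Nonempty (LinearMap.ker (Fintype.linearCombination R h) ≃ₗ[R]
      LinearMap.ker (Fintype.linearCombination R g)) := by
  classical
  obtain ⟨Q, P, hQP, hPQ, hQ⟩ := exists_transitionMatrices_of_span_eq hh hg hspan
  let M := Q.map (algebraMap K R)
  let N := P.map (algebraMap K R)
  have hMN : M * N = 1 := by simp [M, N, ← Matrix.map_mul, hQP]
  have hNM : N * M = 1 := by simp [M, N, ← Matrix.map_mul, hPQ]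
  have hgM : g ᵥ* M = h := funext fun a => by
    simp [← hQ, M, Matrix.vecMul, dotProduct, Algebra.smul_def, mul_comm]
  let e := Matrix.toLin'OfInv hNM hMN
  have hcomp : Fintype.linearCombination R g ∘ₗ (e : (ι → R) →ₗ[R] κ → R) =
      Fintype.linearCombination R h := by
    refine LinearMap.ext fun x => ?_
    change (M *ᵥ x) ⬝ᵥ g = x ⬝ᵥ h
    rw [dotProduct_comm, dotProduct_mulVec, hgM, dotProduct_comm]
  refine ⟨e.ofSubmodules _ _ ?_⟩
  rw [← hcomp, LinearMap.ker_comp, Submodule.map_comap_eq_of_surjective e.surjective]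

theorem linearIndependent_of_ideal_span_image_ne {K R ι : Type*} [Field K] [CommRing R]
    [Algebra K R] {h : ι → R}
    (hmin : ∀ a, Ideal.span (h '' {b | b ≠ a}) ≠ Ideal.span (range h)) :
    LinearIndependent K h := by
  rw [linearIndependent_iff_notMem_span]
  intro a ha
  refine hmin a (le_antisymm (Ideal.span_mono (image_subset_range _ _)) ?_)
  rw [Ideal.span_le]
  rintro _ ⟨b, rfl⟩
  by_cases hba : b = a
  · subst hba
    have hset : h '' (univ \ {b}) = h '' {c | c ≠ b} := by congr 1; ext; simp
    exact Submodule.span_le_restrictScalars K R _ (hset ▸ ha)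
  · exact Ideal.subset_span ⟨b, hba, rfl⟩

theorem mem_span_of_mem_ideal_span {K R : Type*} [CommRing K] [CommRing R] [Algebra K R]
    (𝒜 : ℕ → Submodule K R) [GradedAlgebra 𝒜]
    (h𝒜0 : ∀ r ∈ 𝒜 0, ∃ c : K, r = algebraMap K R c)
    {n : ℕ} {S : Set R} (hS : S ⊆ 𝒜 n) {x : R} (hx : x ∈ 𝒜 n)
    (hxS : x ∈ Ideal.span S) : x ∈ Submodule.span K S := by
  obtain ⟨N, r, y, rfl⟩ := Submodule.mem_span_set'.mp hxS
  rw [← DirectSum.decompose_of_mem_same 𝒜 hx, DirectSum.decompose_sum, DFinsupp.finsetSum_apply,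
    Submodule.coe_sum]
  refine Submodule.sum_mem _ fun i _ => ?_
  -- the degree-`n` part of `r_i y_i` is `(r_i)_0 y_i`, and `(r_i)_0` is a scalar
  obtain ⟨c, hc⟩ := h𝒜0 _ (SetLike.coe_mem (DirectSum.decompose 𝒜 (r i) 0))
  rw [smul_eq_mul, ← zero_add n, DirectSum.coe_decompose_mul_add_of_right_mem 𝒜 (hS (y i).2), hc,
    ← Algebra.smul_def]
  exact Submodule.smul_mem _ _ (Submodule.subset_span (y i).2)

end LinearAlgebra

section Monomials

variable {σ R : Type*} [CommRing R]

noncomputable instance (m : ℕ) [Finite σ] : Fintype {β : σ →₀ ℕ | β.degree = m} :=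
  (Finsupp.finite_of_degree_eq m).fintype

noncomputable def evalMonomials (f : σ → R) (m : ℕ) : {β : σ →₀ ℕ | β.degree = m} → R :=
  fun β => eval f (monomial β.1 1)

theorem evalMonomials_mem_pow [Fintype σ] {f : σ → R} {I : Ideal R} (hf : ∀ i, f i ∈ I) {m : ℕ}
    (β : {β : σ →₀ ℕ | β.degree = m}) : evalMonomials f m β ∈ I ^ m := by
  obtain ⟨β, rfl⟩ := β
  change eval f (monomial β 1) ∈ I ^ β.degree
  rw [eval_monomial, one_mul, Finsupp.prod_pow, Finsupp.degree_eq_sum,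
    ← Finset.prod_pow_eq_pow_sum]
  exact Ideal.prod_mem_prod fun i _ => Ideal.pow_mem_pow (hf i) _

theorem evalMonomials_mem_graded {K : Type*} [Fintype σ] [CommRing K] [Algebra K R]
    (𝒜 : ℕ → Submodule K R) [GradedAlgebra 𝒜] {f : σ → R} {e : ℕ} (hf : ∀ i, f i ∈ 𝒜 e) {m : ℕ}
    (β : {β : σ →₀ ℕ | β.degree = m}) : evalMonomials f m β ∈ 𝒜 (m * e) := by
  obtain ⟨β, rfl⟩ := β
  change eval f (monomial β 1) ∈ 𝒜 (β.degree * e)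
  rw [eval_monomial, one_mul, Finsupp.prod_pow, Finsupp.degree_eq_sum, Finset.sum_mul]
  simpa using SetLike.prod_pow_mem_graded 𝒜 (fun _ => e) f (fun i => β i) fun i _ => hf i

theorem span_range_pow_le_span_evalMonomials (f : σ → R) (m : ℕ) :
    Ideal.span (range f) ^ m ≤ Ideal.span (range (evalMonomials f m)) := by
  induction m with
  | zero =>
    rw [pow_zero, Ideal.one_eq_top, top_le_iff, Ideal.eq_top_iff_one]
    exact Ideal.subset_span ⟨⟨0, by simp⟩, by simp [evalMonomials]⟩
  | succ m ih =>
    grw [pow_succ, ih, Ideal.span_mul_span', Ideal.span_le]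
    rintro _ ⟨_, ⟨β, rfl⟩, _, ⟨i, rfl⟩, rfl⟩
    refine Ideal.subset_span ⟨⟨β.1 + Finsupp.single i 1, by
      simp [show β.1.degree = m from β.2]⟩, ?_⟩
    rw [evalMonomials, ← mul_one (1 : R), ← monomial_mul, map_mul, ← X]
    simp [evalMonomials]

theorem span_eq_span_evalMonomials {K ι : Type*} [Fintype σ] [CommRing K] [Algebra K R]
    (𝒜 : ℕ → Submodule K R) [GradedAlgebra 𝒜]
    (h𝒜0 : ∀ r ∈ 𝒜 0, ∃ c : K, r = algebraMap K R c)
    {f : σ → R} {h : ι → R} {e m : ℕ} (hf : ∀ i, f i ∈ 𝒜 e) (hh : ∀ a, h a ∈ 𝒜 (m * e))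
    (hspan : Ideal.span (range h) = Ideal.span (range f) ^ m) :
    Submodule.span K (range h) = Submodule.span K (range (evalMonomials f m)) := by
  have hg := evalMonomials_mem_graded 𝒜 hf (m := m)
  apply le_antisymm <;> rw [Submodule.span_le] <;> rintro _ ⟨a, rfl⟩
  · refine mem_span_of_mem_ideal_span 𝒜 h𝒜0 (range_subset_iff.2 hg) (hh a) ?_
    exact hspan.le.trans (span_range_pow_le_span_evalMonomials f m) (Ideal.subset_span ⟨a, rfl⟩)
  · refine mem_span_of_mem_ideal_span 𝒜 h𝒜0 (range_subset_iff.2 hh) (hg a) ?_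
    rw [hspan]
    exact evalMonomials_mem_pow (fun i => Ideal.subset_span (mem_range_self i)) a

theorem linearIndependent_monomial_one (m : ℕ) :
    LinearIndependent R fun β : {β : σ →₀ ℕ | β.degree = m} => monomial β.1 (1 : R) := by
  have := (basisMonomials σ R).linearIndependent.comp
    (Subtype.val : {β : σ →₀ ℕ | β.degree = m} → σ →₀ ℕ) Subtype.val_injective
  rw [coe_basisMonomials] at this
  exact this

theorem span_monomial_one_eq_homogeneousSubmodule (m : ℕ) :
    Submodule.span R (range fun β : {β : σ →₀ ℕ | β.degree = m} => monomial β.1 (1 : R)) =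
      homogeneousSubmodule σ R m := by
  rw [homogeneousSubmodule_eq_finsupp_supported, ← restrictSupport, restrictSupport_eq_span,
    image_eq_range]

theorem linearIndependent_evalMonomials {K : Type*} [CommRing K] [Algebra K R] {f : σ → R}
    {m : ℕ} (hf : ∀ F : MvPolynomial σ K, F.IsHomogeneous m → aeval f F = 0 → F = 0) :
    LinearIndependent K (evalMonomials f m) := by
  have hcomp : evalMonomials f m =
      (aeval f).toLinearMap ∘ fun β : {β : σ →₀ ℕ | β.degree = m} => monomial β.1 (1 : K) := by
    funext β
    simp [evalMonomials, aeval_monomial, eval_monomial]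
  rw [hcomp]
  refine (linearIndependent_monomial_one m).map ?_
  rw [span_monomial_one_eq_homogeneousSubmodule, Submodule.disjoint_def]
  exact hf

end Monomials

section Rees

variable {R : Type*} [CommRing R] {s : ℕ} (f : Fin s → R)

theorem reesMap_monomial_s7 (β : Fin s →₀ ℕ) (r : R) :
    reesMap f (monomial β r) =
      Polynomial.C (eval f (monomial β r)) * Polynomial.X ^ β.degree := by
  simp [reesMap, aeval_monomial, eval_monomial, Finsupp.prod_pow, mul_pow,
    Finset.prod_pow_eq_pow_sum, Finsupp.degree_eq_sum, mul_assoc]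

theorem reesMap_of_isHomogeneous {m : ℕ} {F : MvPolynomial (Fin s) R} (hF : F.IsHomogeneous m) :
    reesMap f F = Polynomial.C (eval f F) * Polynomial.X ^ m := by
  conv_lhs => rw [F.as_sum]
  conv_rhs => rw [F.as_sum]
  simp only [map_sum, Finset.sum_mul]
  refine Finset.sum_congr rfl fun β hβ => ?_
  have hdeg : β.degree = m := by
    rw [Finsupp.degree_eq_weight_one]
    exact hF (mem_support_iff.mp hβ)
  rw [reesMap_monomial_s7, hdeg]

theorem mem_ker_reesMap_iff {m : ℕ} {F : MvPolynomial (Fin s) R} (hF : F.IsHomogeneous m) :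
    F ∈ RingHom.ker (reesMap f).toRingHom ↔ eval f F = 0 := by
  rw [RingHom.mem_ker, AlgHom.toRingHom_eq_coe, RingHom.coe_coe, reesMap_of_isHomogeneous f hF,
    Polynomial.C_mul_X_pow_eq_monomial, Polynomial.monomial_eq_zero_iff]

theorem ker_linearCombination_evalMonomials (m : ℕ) :
    LinearMap.ker (Fintype.linearCombination R (evalMonomials f m)) =
      (Submodule.restrictScalars R (RingHom.ker (reesMap f).toRingHom)).comap
        (Fintype.linearCombination R fun β : {β : Fin s →₀ ℕ | β.degree = m} => monomial β.1 1) := by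
  ext x
  have hx : (Fintype.linearCombination R
      (fun β : {β : Fin s →₀ ℕ | β.degree = m} => monomial β.1 (1 : R)) x).IsHomogeneous m := by
    rw [← mem_homogeneousSubmodule, ← span_monomial_one_eq_homogeneousSubmodule,
      ← Fintype.range_linearCombination]
    exact LinearMap.mem_range_self _ x
  rw [LinearMap.mem_ker, Submodule.mem_comap, Submodule.restrictScalars_mem,
    mem_ker_reesMap_iff f hx]
  simp [Fintype.linearCombination_apply, evalMonomials, smul_eval]

noncomputable def kerLinearCombinationEvalMonomialsEquiv (m : ℕ) :
    LinearMap.ker (Fintype.linearCombination R (evalMonomials f m)) ≃ₗ[R]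
      ↥(Submodule.restrictScalars R (RingHom.ker (reesMap f).toRingHom) ⊓
        homogeneousSubmodule (Fin s) R m) :=
  (LinearEquiv.ofEq _ _ (ker_linearCombination_evalMonomials f m)).trans
    ((Submodule.comapEquivInfRange
      (linearIndependent_iff_injective_fintypeLinearCombination.mp
        (linearIndependent_monomial_one m)) _).trans
      (LinearEquiv.ofEq _ _ (by
        rw [Fintype.range_linearCombination, span_monomial_one_eq_homogeneousSubmodule])))

end Rees

theorem first_syzygy_iso_relations_of_T_degree_m_general
    {K R : Type*} [Field K] [CommRing R] [Algebra K R]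
    (𝒜 : ℕ → Submodule K R) [GradedAlgebra 𝒜]
    (h𝒜0 : ∀ r ∈ 𝒜 0, ∃ c : K, r = algebraMap K R c)
    (I : Ideal R) (d s m : ℕ) (f : Fin s → R)
    (hfhom : ∀ a, f a ∈ 𝒜 d)
    (hfspan : Ideal.span (Set.range f) = I)
    (hvanish : ∀ F ∈ RingHom.ker (reesMap f).toRingHom, F.IsHomogeneous m →
      (∀ α, MvPolynomial.coeff α F ∈ 𝒜 0) → F = 0) :
    ∀ (t : ℕ) (h : Fin t → R), (∀ a, h a ∈ 𝒜 (m * d)) →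
      Ideal.span (Set.range h) = I ^ m →
      (∀ a : Fin t, Ideal.span (h '' {b | b ≠ a}) ≠ I ^ m) →
      Nonempty
        ((LinearMap.ker (∑ a : Fin t, (LinearMap.proj a : (Fin t → R) →ₗ[R] R).smulRight (h a)))
          ≃ₗ[R]
        ↥((Submodule.restrictScalars R (RingHom.ker (reesMap f).toRingHom)) ⊓
          MvPolynomial.homogeneousSubmodule (Fin s) R m)) := by
  intro t h hhom hspan hmin
  subst hfspan
  rcases subsingleton_or_nontrivial R with hR | hR
  · exact ⟨LinearEquiv.ofSubsingleton _ _⟩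
  have hforms : ∀ F : MvPolynomial (Fin s) K, F.IsHomogeneous m → aeval f F = 0 → F = 0 := by
    intro F hF hF0
    have hker : map (algebraMap K R) F ∈ RingHom.ker (reesMap f).toRingHom := by
      rwa [mem_ker_reesMap_iff f (hF.map _), eval_map, ← aeval_def]
    have hcoeff : ∀ α, coeff α (map (algebraMap K R) F) ∈ 𝒜 0 := fun α => by
      rw [coeff_map]
      exact SetLike.algebraMap_mem_graded 𝒜 _
    refine map_injective _ (algebraMap K R).injective ?_
    rw [hvanish _ hker (hF.map _) hcoeff, map_zero]
  obtain ⟨e⟩ := nonempty_ker_linearCombination_equiv_of_span_eq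
    (linearIndependent_of_ideal_span_image_ne (hspan ▸ hmin))
    (linearIndependent_evalMonomials hforms)
    (span_eq_span_evalMonomials 𝒜 h𝒜0 hfhom hhom hspan)
  rw [sum_proj_smulRight_eq_linearCombination]
  exact ⟨e.trans (kerLinearCombinationEvalMonomialsEquiv f m)⟩

/-- Let `R` be a graded `K`-algebra with `R₀ = K`, `I` a homogeneous
ideal minimally generated by `f_1,…,f_s` of degree `d`, and `L ⊂ S = R[T_1,…,T_s]` the
relation ideal of the Rees algebra of `I`.  If `L` has no nonzero element of bidegree
`(m, md)` (i.e. no `T`-homogeneous relation of `T`-degree `m` with coefficients in `𝒜 0`),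
then the first syzygy module `Ω₁(Iᵐ)` — the kernel of the map `Rᵗ → R` given by any
minimal homogeneous generating set `h_1,…,h_t` of `Iᵐ` — is isomorphic as an `R`-module
to `L_{(m,−)}`, the `T`-degree-`m` graded piece of `L`. -/
theorem first_syzygy_iso_relations_of_T_degree_m
    {K R : Type*} [Field K] [CommRing R] [Algebra K R]
    (𝒜 : ℕ → Submodule K R) [GradedAlgebra 𝒜]
    (h𝒜0 : ∀ r ∈ 𝒜 0, ∃ c : K, r = algebraMap K R c)
    (I : Ideal R) (d s m : ℕ) (hm : 1 ≤ m) (f : Fin s → R)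
    (hfhom : ∀ a, f a ∈ 𝒜 d)
    (hfspan : Ideal.span (Set.range f) = I)
    (hfmin : ∀ a : Fin s, Ideal.span (f '' {b | b ≠ a}) ≠ I)
    (hvanish : ∀ F ∈ RingHom.ker (reesMap f).toRingHom, F.IsHomogeneous m →
      (∀ α, MvPolynomial.coeff α F ∈ 𝒜 0) → F = 0) :
    ∀ (t : ℕ) (h : Fin t → R), (∀ a, h a ∈ 𝒜 (m * d)) →
      Ideal.span (Set.range h) = I ^ m →
      (∀ a : Fin t, Ideal.span (h '' {b | b ≠ a}) ≠ I ^ m) →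
      Nonempty
        ((LinearMap.ker (∑ a : Fin t, (LinearMap.proj a : (Fin t → R) →ₗ[R] R).smulRight (h a)))
          ≃ₗ[R]
        ↥((Submodule.restrictScalars R (RingHom.ker (reesMap f).toRingHom)) ⊓
          MvPolynomial.homogeneousSubmodule (Fin s) R m)) :=
  first_syzygy_iso_relations_of_T_degree_m_general 𝒜 h𝒜0 I d s m f hfhom hfspan hvanish
end

section
/- Let G be a closed K_4-free graph with e edges. Then the m-th power J_G^m of the binomial edge ideal is minimally generated by C(e+m−1, m) elements; equivalently, β_{0, 2m}(J_G^m) = C(e+m−1, m). -/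
open MvPolynomial

/-- The graded free module `⨁_j R(−j)^{β j}`. -/
abbrev GradedFreeMod (R : Type*) [CommRing R] (β : ℕ → ℕ) : Type _ :=
  (Σ j : ℕ, Fin (β j)) →₀ R

/-- A minimal graded free resolution of an ideal `I` of a ring `R` graded by `𝒜`,
with graded Betti numbers `β i j`. -/
structure MinimalGradedFreeResolution {K R : Type*} [Field K] [CommRing R] [Algebra K R]
    (𝒜 : ℕ → Submodule K R) (I : Ideal R) (β : ℕ → ℕ → ℕ) where
  d : ∀ i : ℕ, GradedFreeMod R (β (i + 1)) →ₗ[R] GradedFreeMod R (β i)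
  ε : GradedFreeMod R (β 0) →ₗ[R] R
  range_ε : LinearMap.range ε = I
  homog_ε : ∀ (j : ℕ) (t : Fin (β 0 j)), ε (Finsupp.single ⟨j, t⟩ 1) ∈ 𝒜 j
  homog_d : ∀ (i j : ℕ) (t : Fin (β (i + 1) j)) (j' : ℕ) (t' : Fin (β i j')),
    d i (Finsupp.single ⟨j, t⟩ 1) ⟨j', t'⟩ ∈ 𝒜 (j - j')
  minimal_d : ∀ (i j : ℕ) (t : Fin (β (i + 1) j)) (j' : ℕ) (t' : Fin (β i j')),
    j ≤ j' → d i (Finsupp.single ⟨j, t⟩ 1) ⟨j', t'⟩ = 0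
  exact_zero : LinearMap.range (d 0) = LinearMap.ker ε
  exact_succ : ∀ i : ℕ, LinearMap.range (d (i + 1)) = LinearMap.ker (d i)

/-- The binomial edge ideal `J_G = (x_i y_j − x_j y_i : {i,j} ∈ E(G))` in the
polynomial ring `K[x_1,…,x_n,y_1,…,y_n]`, with `x i = X (Sum.inl i)` and
`y i = X (Sum.inr i)`. -/
noncomputable def binomialEdgeIdeal (K : Type*) [Field K] (n : ℕ)
    (G : SimpleGraph (Fin n)) : Ideal (MvPolynomial (Fin n ⊕ Fin n) K) :=
  Ideal.span {p | ∃ i j : Fin n, G.Adj i j ∧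
    p = X (Sum.inl i) * X (Sum.inr j) - X (Sum.inl j) * X (Sum.inr i)}

/-!
Closedness and `K₄`-freeness forbid strictly nested edges `{i < j}`, `{k < l}` with
`i < k < l < j`: the four vertices would form a clique. For the lexicographic order
`x₁ > ⋯ > xₙ > y₁ > ⋯ > yₙ` the binomial of an edge `{i < j}` has leading monomial `x_i y_j`,
so a product of `m` edge binomials has leading monomial `x^A y^B`, where `A` and `B` are the
multisets of smaller and of larger endpoints. Without nested edges, `A` and `B` determine the
multiset of edges, so the `C(e + m - 1, m)` products are linearly independent. They span the
degree-`2m` part of `J_G^m`, whose dimension is `β_{0,2m}` for every minimal graded free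
resolution, because `J_G^m` has no nonzero elements of degree `< 2m`.
-/

open Finsupp

namespace MvPolynomial

variable {σ R : Type*} [CommSemiring R]

attribute [local instance] gradedAlgebra in
theorem homogeneousComponent_mul_of_isHomogeneous {r s : MvPolynomial σ R} {i : ℕ}
    (hs : s.IsHomogeneous i) (k : ℕ) :
    homogeneousComponent k (r * s) = if i ≤ k then homogeneousComponent (k - i) r * s else 0 := by
  simp_rw [← decomposition.decompose'_apply]
  exact DirectSum.coe_decompose_mul_of_right_mem _ k ((mem_homogeneousSubmodule _ _).2 hs)

variable {S : Set (MvPolynomial σ R)} {d : ℕ}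

theorem homogeneousComponent_mem_span_of_mem_ideal_span (hS : ∀ s ∈ S, s.IsHomogeneous d)
    {p : MvPolynomial σ R} (hp : p ∈ Ideal.span S) :
    homogeneousComponent d p ∈ Submodule.span R S := by
  obtain ⟨c, hc, rfl⟩ := Submodule.mem_span_set.mp hp
  rw [Finsupp.sum, map_sum]
  refine Submodule.sum_mem _ fun s hs => ?_
  rw [smul_eq_mul, homogeneousComponent_mul_of_isHomogeneous (hS s (hc hs)), if_pos le_rfl,
    Nat.sub_self, homogeneousComponent_zero, ← smul_eq_C_mul]
  exact Submodule.smul_mem _ _ (Submodule.subset_span (hc hs))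

theorem homogeneousComponent_eq_zero_of_mem_ideal_span (hS : ∀ s ∈ S, s.IsHomogeneous d)
    {p : MvPolynomial σ R} (hp : p ∈ Ideal.span S) {k : ℕ} (hk : k < d) :
    homogeneousComponent k p = 0 := by
  obtain ⟨c, hc, rfl⟩ := Submodule.mem_span_set.mp hp
  rw [Finsupp.sum, map_sum]
  refine Finset.sum_eq_zero fun s hs => ?_
  rw [smul_eq_mul, homogeneousComponent_mul_of_isHomogeneous (hS s (hc hs)), if_neg hk.not_ge]

theorem isHomogeneous_multiset_prod_map {ι : Type*} {s : Multiset ι} {f : ι → MvPolynomial σ R}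
    {k : ℕ} (h : ∀ i ∈ s, (f i).IsHomogeneous k) :
    (s.map f).prod.IsHomogeneous (k * Multiset.card s) := by
  induction s using Multiset.induction with
  | empty => simpa using isHomogeneous_one σ R
  | cons i s ih =>
    rw [Multiset.map_cons, Multiset.prod_cons, Multiset.card_cons, mul_add_one, add_comm]
    exact (h i (Multiset.mem_cons_self i s)).mul
      (ih fun j hj => h j (Multiset.mem_cons_of_mem hj))

end MvPolynomial

theorem Ideal.span_range_pow {R ι : Type*} [CommSemiring R] (f : ι → R) (m : ℕ) :
    Ideal.span (Set.range f) ^ m =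
      Ideal.span (Set.range fun M : Sym ι m => (M.1.map f).prod) := by
  induction m with
  | zero =>
    rw [pow_zero, Ideal.one_eq_top, eq_comm, Ideal.eq_top_iff_one]
    exact Ideal.subset_span ⟨Sym.nil, by simp⟩
  | succ m ih =>
    rw [pow_succ, ih, Ideal.span_mul_span']
    congr 1
    ext x
    simp only [Set.mem_mul, Set.mem_range]
    constructor
    · rintro ⟨_, ⟨M, rfl⟩, _, ⟨i, rfl⟩, rfl⟩
      exact ⟨i ::ₛ M, by
        change ((i ::ₘ M.1).map f).prod = _
        rw [Multiset.map_cons, Multiset.prod_cons, mul_comm]⟩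
    · rintro ⟨M, rfl⟩
      obtain ⟨i, M, rfl⟩ := M.exists_eq_cons_of_succ
      refine ⟨_, ⟨M, rfl⟩, _, ⟨i, rfl⟩, ?_⟩
      change _ = ((i ::ₘ M.1).map f).prod
      rw [Multiset.map_cons, Multiset.prod_cons, mul_comm]

namespace MinimalGradedFreeResolution

variable {σ K : Type*} [Field K] {I : Ideal (MvPolynomial σ K)} {β : ℕ → ℕ → ℕ}
  (F : MinimalGradedFreeResolution (homogeneousSubmodule σ K) I β)

theorem constantCoeff_d_apply (i : ℕ) (w : GradedFreeMod (MvPolynomial σ K) (β (i + 1)))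
    (a : Σ j, Fin (β i j)) : constantCoeff (F.d i w a) = 0 := by
  induction w using Finsupp.induction_linear with
  | zero => simp
  | add v w hv hw => simp [hv, hw]
  | single b r =>
    obtain ⟨j, t⟩ := b
    obtain ⟨j', t'⟩ := a
    rw [← mul_one r, ← smul_eq_mul, ← Finsupp.smul_single, map_smul, Finsupp.smul_apply,
      smul_eq_mul, map_mul]
    suffices constantCoeff (F.d i (single ⟨j, t⟩ 1) ⟨j', t'⟩) = 0 by rw [this, mul_zero]
    rcases le_or_gt j j' with h | h
    · rw [F.minimal_d i j t j' t' h, map_zero]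
    · rw [constantCoeff_eq]
      exact (F.homog_d i j t j' t').coeff_eq_zero (by simp; omega)

theorem linearIndependent_ε_single (d : ℕ) :
    LinearIndependent K fun t : Fin (β 0 d) => F.ε (single ⟨d, t⟩ 1) := by
  rw [Fintype.linearIndependent_iff]
  intro c hc t
  -- The relation gives an element of `ker ε = im d₀` with constant entries, while minimality
  -- leaves no constant terms in the entries of `im d₀`.
  obtain ⟨w, hw⟩ :
      ∑ t, c t • single ⟨d, t⟩ (1 : MvPolynomial σ K) ∈ LinearMap.range (F.d 0) := by
    rw [F.exact_zero, LinearMap.mem_ker, map_sum]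
    simpa only [LinearMap.map_smul_of_tower] using hc
  have := F.constantCoeff_d_apply 0 w ⟨d, t⟩
  rw [hw] at this
  simpa [Finsupp.single_apply] using this

theorem ε_mem (v : GradedFreeMod (MvPolynomial σ K) (β 0)) : F.ε v ∈ I :=
  F.range_ε.le ⟨v, rfl⟩

variable {S : Set (MvPolynomial σ K)} {d : ℕ}

theorem homogeneousComponent_ε_mem_span (hI : I = Ideal.span S)
    (hS : ∀ s ∈ S, s.IsHomogeneous d) (v : GradedFreeMod (MvPolynomial σ K) (β 0)) :
    homogeneousComponent d (F.ε v) ∈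
      Submodule.span K (Set.range fun t : Fin (β 0 d) => F.ε (single ⟨d, t⟩ 1)) := by
  induction v using Finsupp.induction_linear with
  | zero => simp
  | add v w hv hw => simpa using add_mem hv hw
  | single a r =>
    obtain ⟨j, t⟩ := a
    have hmem : F.ε (single ⟨j, t⟩ 1) ∈ Ideal.span S := hI ▸ F.ε_mem _
    rw [← mul_one r, ← smul_eq_mul, ← Finsupp.smul_single, map_smul, smul_eq_mul,
      homogeneousComponent_mul_of_isHomogeneous (F.homog_ε j t)]
    split_ifs with hjd
    · obtain hjd | rfl := hjd.lt_or_eq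
      · rw [← homogeneousComponent_eq_self (F.homog_ε j t),
          homogeneousComponent_eq_zero_of_mem_ideal_span hS hmem hjd, mul_zero]
        exact zero_mem _
      · rw [Nat.sub_self, homogeneousComponent_zero, ← smul_eq_C_mul]
        exact Submodule.smul_mem _ _ (Submodule.subset_span ⟨t, rfl⟩)
    · exact zero_mem _

theorem span_range_ε_single (hI : I = Ideal.span S) (hS : ∀ s ∈ S, s.IsHomogeneous d) :
    Submodule.span K (Set.range fun t : Fin (β 0 d) => F.ε (single ⟨d, t⟩ 1)) =
      Submodule.span K S := by
  apply le_antisymm <;> rw [Submodule.span_le]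
  · rintro _ ⟨t, rfl⟩
    beta_reduce
    rw [SetLike.mem_coe, ← homogeneousComponent_eq_self (F.homog_ε d t)]
    exact homogeneousComponent_mem_span_of_mem_ideal_span hS (hI ▸ F.ε_mem _)
  · intro s hs
    obtain ⟨v, rfl⟩ : s ∈ LinearMap.range F.ε := by
      rw [F.range_ε, hI]
      exact Ideal.subset_span hs
    rw [SetLike.mem_coe, ← homogeneousComponent_eq_self (hS _ hs)]
    exact F.homogeneousComponent_ε_mem_span hI hS v

theorem betti_zero_eq_finrank_span
    (F : MinimalGradedFreeResolution (homogeneousSubmodule σ K) I β) (hI : I = Ideal.span S)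
    (hS : ∀ s ∈ S, s.IsHomogeneous d) :
    β 0 d = Module.finrank K (Submodule.span K S) := by
  rw [← F.span_range_ε_single hI hS, finrank_span_eq_card (F.linearIndependent_ε_single d),
    Fintype.card_fin]

end MinimalGradedFreeResolution

theorem Finsupp.toLex_single_add_single_lt {σ : Type*} [LinearOrder σ] {a b c d : σ}
    (hb : a < b) (hc : a < c) (hd : a ≤ d) :
    toLex (single b 1 + single c 1) < toLex (single a 1 + single d 1) := by
  refine Finsupp.Lex.lt_iff.2 ⟨a, fun k hk => ?_, ?_⟩
  · simp [hk.ne', (hk.trans hb).ne', (hk.trans hc).ne', (hk.trans_le hd).ne']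
  · simp [single_apply, hb.ne, hc.ne]

namespace MonomialOrder

variable {σ K : Type*} [Field K] (m : MonomialOrder σ)

theorem degree_multiset_prod {s : Multiset (MvPolynomial σ K)} (hs : 0 ∉ s) :
    m.degree s.prod = (s.map m.degree).sum := by
  induction s using Multiset.induction with
  | empty => simp
  | cons p s ih =>
    rw [Multiset.mem_cons, not_or] at hs
    rw [Multiset.prod_cons, m.degree_mul (Ne.symm hs.1) (Multiset.prod_ne_zero hs.2), ih hs.2,
      Multiset.map_cons, Multiset.sum_cons]

theorem linearIndependent_of_injective_degree {ι : Type*} {v : ι → MvPolynomial σ K}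
    (hv : ∀ i, v i ≠ 0) (hinj : Function.Injective (m.degree ∘ v)) : LinearIndependent K v := by
  classical
  rw [linearIndependent_iff']
  intro s g hg i hi
  by_contra hgi
  -- Only one term of the relation contributes to the coefficient at the largest leading exponent.
  obtain ⟨j, hj, hmax⟩ := (s.filter (g · ≠ 0)).exists_max_image
    (fun i => m.toSyn (m.degree (v i))) ⟨i, Finset.mem_filter.2 ⟨hi, hgi⟩⟩
  rw [Finset.mem_filter] at hj
  have hcoeff := congrArg (coeff (m.degree (v j))) hg
  rw [coeff_sum, Finset.sum_eq_single_of_mem j hj.1, coeff_smul, coeff_zero,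
    smul_eq_mul] at hcoeff
  · exact mul_ne_zero hj.2 (m.coeff_degree_ne_zero_iff.2 (hv j)) hcoeff
  · intro k hk hkj
    by_cases hgk : g k = 0
    · rw [hgk, zero_smul, coeff_zero]
    rw [coeff_smul, m.coeff_eq_zero_of_lt, smul_zero]
    exact (hmax k (Finset.mem_filter.2 ⟨hk, hgk⟩)).lt_of_ne
      fun h => hkj (hinj (m.toSyn.injective h))

end MonomialOrder

def NoStrictNesting {α β : Type*} [LT α] [LE β] (s : Set (α × β)) : Prop :=
  ∀ p ∈ s, ∀ q ∈ s, p.1 < q.1 → p.2 ≤ q.2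

namespace NoStrictNesting

variable {α β : Type*} [LinearOrder α] [LinearOrder β] {s : Set (α × β)}

theorem exists_mem_forall_le (hs : NoStrictNesting s) {M : Multiset (α × β)}
    (hM : ∀ p ∈ M, p ∈ s) (h0 : M ≠ 0) : ∃ p ∈ M, ∀ q ∈ M, q.1 ≤ p.1 ∧ q.2 ≤ p.2 := by
  -- A lexicographic maximum of `(q.2, q.1)` is also maximal in the first coordinate:
  -- a pair with larger first and smaller second coordinate would nest inside it.
  obtain ⟨p, hp, hmax⟩ := M.exists_max_image (fun q => toLex (q.2, q.1)) h0
  refine ⟨p, hp, fun q hq => ?_⟩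
  have hlex := Prod.Lex.toLex_le_toLex.1 (hmax q hq)
  refine ⟨le_of_not_gt fun h1 => ?_, hlex.elim le_of_lt fun h => h.1.le⟩
  have h2 := hs p (hM p hp) q (hM q hq) h1
  rcases hlex with h | h
  · exact h.not_ge h2
  · exact h.2.not_gt h1

theorem eq_of_map_fst_eq_of_map_snd_eq (hs : NoStrictNesting s) {M M' : Multiset (α × β)}
    (hM : ∀ p ∈ M, p ∈ s) (hM' : ∀ p ∈ M', p ∈ s) (h1 : M.map Prod.fst = M'.map Prod.fst)
    (h2 : M.map Prod.snd = M'.map Prod.snd) : M = M' := by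
  induction M using Multiset.strongInductionOn generalizing M' with
  | ih M ih =>
  rcases eq_or_ne M 0 with rfl | h0
  · simpa [eq_comm] using h1
  have h0' : M' ≠ 0 := by rintro rfl; simp_all
  obtain ⟨p, hp, hpmax⟩ := hs.exists_mem_forall_le hM h0
  obtain ⟨p', hp', hpmax'⟩ := hs.exists_mem_forall_le hM' h0'
  have hpp' : p = p' := by
    obtain ⟨q, hq, hq1⟩ := Multiset.mem_map.1 (h1 ▸ Multiset.mem_map_of_mem Prod.fst hp)
    obtain ⟨q', hq', hq'1⟩ :=
      Multiset.mem_map.1 (h1.symm ▸ Multiset.mem_map_of_mem Prod.fst hp')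
    obtain ⟨r, hr, hr2⟩ := Multiset.mem_map.1 (h2 ▸ Multiset.mem_map_of_mem Prod.snd hp)
    obtain ⟨r', hr', hr'2⟩ :=
      Multiset.mem_map.1 (h2.symm ▸ Multiset.mem_map_of_mem Prod.snd hp')
    exact Prod.ext (le_antisymm (hq1 ▸ (hpmax' q hq).1) (hq'1 ▸ (hpmax q' hq').1))
      (le_antisymm (hr2 ▸ (hpmax' r hr).2) (hr'2 ▸ (hpmax r' hr').2))
  subst hpp'
  rw [← Multiset.cons_erase hp, ← Multiset.cons_erase hp'] at h1 h2 ⊢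
  simp only [Multiset.map_cons, Multiset.cons_inj_right] at h1 h2
  rw [ih _ (Multiset.erase_lt.2 hp) (fun q hq => hM q (Multiset.mem_of_mem_erase hq))
    (fun q hq => hM' q (Multiset.mem_of_mem_erase hq)) h1 h2]

end NoStrictNesting

namespace SimpleGraph

variable {V : Type*} [LinearOrder V] (G : SimpleGraph V)

def ascEdgeSet : Set (V × V) := {p | p.1 < p.2 ∧ G.Adj p.1 p.2}

theorem ncard_ascEdgeSet : G.ascEdgeSet.ncard = G.edgeSet.ncard := by
  have himage : (fun p : V × V => s(p.1, p.2)) '' G.ascEdgeSet = G.edgeSet := by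
    ext e
    induction e using Sym2.ind with
    | _ a b =>
      rw [mem_edgeSet]
      constructor
      · rintro ⟨⟨x, y⟩, ⟨-, hxy⟩, h⟩
        exact (mem_edgeSet G).1 (h ▸ (mem_edgeSet G).2 hxy)
      · intro hab
        rcases hab.ne.lt_or_gt with h | h
        · exact ⟨(a, b), ⟨h, hab⟩, rfl⟩
        · exact ⟨(b, a), ⟨h, hab.symm⟩, Sym2.eq_swap⟩
  rw [← himage, Set.InjOn.ncard_image]
  rintro ⟨a, b⟩ ⟨hab, -⟩ ⟨c, d⟩ ⟨hcd, -⟩ h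
  rcases Sym2.eq_iff.1 h with ⟨rfl, rfl⟩ | ⟨rfl, rfl⟩
  · rfl
  · exact absurd (hab.trans hcd) (lt_irrefl _)

theorem noStrictNesting_ascEdgeSet
    (hclosed : ∀ i j k : V, i < j → j < k → G.Adj i k → G.Adj i j ∧ G.Adj j k)
    (hK4 : G.CliqueFree 4) : NoStrictNesting G.ascEdgeSet := by
  rintro ⟨i, j⟩ ⟨-, hij⟩ ⟨k, l⟩ ⟨hkl, hkl'⟩ (hik : i < k)
  by_contra! hlj
  obtain ⟨hik', hkj⟩ := hclosed i k j hik (hkl.trans hlj) hij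
  obtain ⟨hil, hlj'⟩ := hclosed i l j (hik.trans hkl) hlj hij
  refine hK4 (insert i {k, l, j}) ((is3Clique_triple_iff.2 ⟨hkl', hkj, hlj'⟩).insert ?_)
  simpa using ⟨hik', hil, hij⟩

end SimpleGraph

namespace BinomialEdgeIdeal

variable {K : Type*} [Field K] {n : ℕ}

variable (K) in
noncomputable def binomial (p : Fin n × Fin n) : MvPolynomial (Fin n ⊕ Fin n) K :=
  X (Sum.inl p.1) * X (Sum.inr p.2) - X (Sum.inl p.2) * X (Sum.inr p.1)

theorem binomialEdgeIdeal_eq_span (G : SimpleGraph (Fin n)) :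
    binomialEdgeIdeal K n G = Ideal.span (Set.range fun e : G.ascEdgeSet => binomial K e.1) := by
  apply le_antisymm <;> rw [binomialEdgeIdeal, Ideal.span_le]
  · rintro _ ⟨i, j, hij, rfl⟩
    rcases hij.ne.lt_or_gt with h | h
    · exact Ideal.subset_span ⟨⟨(i, j), h, hij⟩, rfl⟩
    · rw [← neg_sub, SetLike.mem_coe]
      exact neg_mem (Ideal.subset_span ⟨⟨(j, i), h, hij.symm⟩, by simp [binomial]⟩)
  · rintro _ ⟨⟨p, -, hp⟩, rfl⟩
    exact Ideal.subset_span ⟨p.1, p.2, hp, rfl⟩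

theorem isHomogeneous_binomial (p : Fin n × Fin n) : (binomial K p).IsHomogeneous 2 :=
  ((isHomogeneous_X _ _).mul (isHomogeneous_X _ _)).sub
    ((isHomogeneous_X _ _).mul (isHomogeneous_X _ _))

noncomputable def leadingExponent (p : Fin n × Fin n) : Fin n ⊕ Fin n →₀ ℕ :=
  single (Sum.inl p.1) 1 + single (Sum.inr p.2) 1

-- `MonomialOrder.lex` ranks smaller variables higher, so this is `x 0 > ⋯ > x (n-1) > y 0 > ⋯`.
noncomputable def xyLex (n : ℕ) : MonomialOrder (Fin n ⊕ Fin n) :=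
  MonomialOrder.lex (σ := Fin n ⊕ₗ Fin n)

theorem degree_binomial {p : Fin n × Fin n} (h : p.1 < p.2) :
    (xyLex n).degree (binomial K p) = leadingExponent p := by
  classical
  have hX : ∀ a b : Fin n ⊕ Fin n, (X a * X b : MvPolynomial (Fin n ⊕ Fin n) K) =
      monomial (single a 1 + single b 1) 1 := fun a b => by
    rw [X, X, monomial_mul, one_mul]
  rw [binomial, leadingExponent, hX, hX, MonomialOrder.degree_sub_of_lt] <;>
    simp only [MonomialOrder.degree_monomial, one_ne_zero, if_false]
  exact Finsupp.toLex_single_add_single_lt (σ := Fin n ⊕ₗ Fin n)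
    (Sum.Lex.inl_lt_inl_iff.2 h) (Sum.Lex.inl_lt_inr _ _) (Sum.Lex.inl_lt_inr _ _).le

theorem binomial_ne_zero {p : Fin n × Fin n} (h : p.1 < p.2) : binomial K p ≠ 0 :=
  (xyLex n).ne_zero_of_degree_ne_zero fun h0 => by
    simpa [degree_binomial h, leadingExponent] using DFunLike.congr_fun h0 (Sum.inl p.1)

theorem degree_prod_binomial {M : Multiset (Fin n × Fin n)} (hM : ∀ p ∈ M, p.1 < p.2) :
    (xyLex n).degree (M.map (binomial K)).prod = (M.map leadingExponent).sum := by
  have h0 : (0 : MvPolynomial _ K) ∉ M.map (binomial K) := fun h0 => by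
    obtain ⟨p, hp, hp0⟩ := Multiset.mem_map.1 h0
    exact binomial_ne_zero (hM p hp) hp0
  rw [MonomialOrder.degree_multiset_prod _ h0, Multiset.map_map]
  exact congrArg _ (Multiset.map_congr rfl fun p hp => degree_binomial (hM p hp))

theorem sum_leadingExponent_apply_inl (M : Multiset (Fin n × Fin n)) (a : Fin n) :
    (M.map leadingExponent).sum (Sum.inl a) = (M.map Prod.fst).count a := by
  induction M using Multiset.induction with
  | empty => simp
  | cons p M ih =>
    simp [ih, leadingExponent, single_apply, Multiset.count_cons, eq_comm, add_comm]

theorem sum_leadingExponent_apply_inr (M : Multiset (Fin n × Fin n)) (a : Fin n) :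
    (M.map leadingExponent).sum (Sum.inr a) = (M.map Prod.snd).count a := by
  induction M using Multiset.induction with
  | empty => simp
  | cons p M ih =>
    simp [ih, leadingExponent, single_apply, Multiset.count_cons, eq_comm, add_comm]

theorem linearIndependent_prod_binomial {s : Set (Fin n × Fin n)} (hlt : ∀ p ∈ s, p.1 < p.2)
    (hs : NoStrictNesting s) (m : ℕ) :
    LinearIndependent K fun M : Sym s m => (M.1.map fun e => binomial K e.1).prod := by
  have hM : ∀ M : Sym s m, ∀ p ∈ M.1.map Subtype.val, p ∈ s := by
    rintro M _ hp
    obtain ⟨e, -, rfl⟩ := Multiset.mem_map.1 hp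
    exact e.2
  have hprod : ∀ M : Sym s m,
      (M.1.map fun e => binomial K e.1).prod = ((M.1.map Subtype.val).map (binomial K)).prod :=
    fun M => by rw [Multiset.map_map]; rfl
  simp_rw [hprod]
  refine (xyLex n).linearIndependent_of_injective_degree
    (fun M => Multiset.prod_ne_zero fun h0 => ?_) fun M M' h => ?_
  · obtain ⟨p, hp, hp0⟩ := Multiset.mem_map.1 h0
    exact binomial_ne_zero (hlt p (hM M p hp)) hp0
  · simp only [Function.comp_apply, degree_prod_binomial fun p hp => hlt p (hM _ p hp)] at h
    have h1 : (M.1.map Subtype.val).map Prod.fst = (M'.1.map Subtype.val).map Prod.fst := by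
      ext a; rw [← sum_leadingExponent_apply_inl, h, sum_leadingExponent_apply_inl]
    have h2 : (M.1.map Subtype.val).map Prod.snd = (M'.1.map Subtype.val).map Prod.snd := by
      ext a; rw [← sum_leadingExponent_apply_inr, h, sum_leadingExponent_apply_inr]
    exact Subtype.ext (Multiset.map_injective Subtype.val_injective
      (hs.eq_of_map_fst_eq_of_map_snd_eq (hM M) (hM M') h1 h2))

end BinomialEdgeIdeal

open BinomialEdgeIdeal

/-- Let `G` be a closed `K₄`-free graph with `e` edges.  Then the
`m`-th power `J_G^m` of the binomial edge ideal is minimally generated by `C(e+m−1, m)`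
elements: `β_{0, 2m}(J_G^m) = C(e+m−1, m)`. -/
theorem number_of_minimal_generators_of_power_of_binomial_edge_ideal
    {K : Type*} [Field K] (n : ℕ) (G : SimpleGraph (Fin n))
    (hclosed : ∀ i j k : Fin n, i < j → j < k → G.Adj i k → G.Adj i j ∧ G.Adj j k)
    (hK4free : ∀ s : Finset (Fin n), ¬ G.IsNClique 4 s) :
    ∀ (m : ℕ), 1 ≤ m → ∀ (β : ℕ → ℕ → ℕ)
      (_ : MinimalGradedFreeResolution
        (fun j => MvPolynomial.homogeneousSubmodule (Fin n ⊕ Fin n) K j)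
        ((binomialEdgeIdeal K n G) ^ m) β),
      β 0 (2 * m) = Nat.choose (G.edgeSet.ncard + m - 1) m := by
  intro m _ β F
  have hhom : ∀ x ∈ Set.range fun M : Sym G.ascEdgeSet m =>
      (M.1.map fun e => binomial K e.1).prod, x.IsHomogeneous (2 * m) := by
    rintro _ ⟨M, rfl⟩
    have := isHomogeneous_multiset_prod_map (s := M.1) (k := 2)
      fun e _ => isHomogeneous_binomial (K := K) e.1
    rwa [M.2] at this
  have hind := linearIndependent_prod_binomial (K := K) (fun p hp => hp.1)
    (G.noStrictNesting_ascEdgeSet hclosed hK4free) m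
  classical
  rw [F.betti_zero_eq_finrank_span (by rw [binomialEdgeIdeal_eq_span, Ideal.span_range_pow])
    hhom, finrank_span_eq_card hind, ← Nat.card_eq_fintype_card, Sym.natCard_sym_eq_choose,
    Nat.card_coe_set_eq, G.ncard_ascEdgeSet]
end
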